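/- The BFG correction preserves positive definiteness: if additionally (Rx, x) > 0 for every nonzero x ∈ H, ζ ≠ 0, and (ζ, u) > 0, then ((R + δR_BFG) ξ, ξ) > 0 for every nonzero ξ ∈ H. -/
import Mathlib


open RealInnerProductSpace

variable {H : Type*} [NormedAddCommGroup H] [InnerProductSpace ℝ H] [CompleteSpace H]

/-- The BFG correction operator:
`δR_BFG ξ = (1 + (ζ,Rζ)/(ζ,u))·((ξ,u)/(ζ,u))·u - ((ξ,u)/(ζ,u))·Rζ - ((ξ,Rζ)/(ζ,u))·u`. -/
noncomputable def deltaBFG (R : H →L[ℝ] H) (u ζ : H) : H →L[ℝ] H :=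
  ((1 + ⟪ζ, R ζ⟫ / ⟪ζ, u⟫) * (⟪ζ, u⟫)⁻¹) • (innerSL ℝ u).smulRight u
    - (⟪ζ, u⟫)⁻¹ • (innerSL ℝ u).smulRight (R ζ)
    - (⟪ζ, u⟫)⁻¹ • (innerSL ℝ (R ζ)).smulRight u

/-- The BFG correction preserves positive definiteness: if `R` is
positive definite, `ζ ≠ 0` and `(ζ, u) > 0`, then `R + δR_BFG` is positive definite. -/
theorem BFG_positive_definite (R : H →L[ℝ] H) (hR : IsSelfAdjoint R) (u ζ : H)
    (hζu : ⟪ζ, u⟫ ≠ 0) (hζRζ : ⟪ζ, R ζ⟫ ≠ 0)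
    (hpos : ∀ x : H, x ≠ 0 → 0 < ⟪R x, x⟫) (hζ : ζ ≠ 0) (hζu' : 0 < ⟪ζ, u⟫) :
    ∀ ξ : H, ξ ≠ 0 → 0 < ⟪(R + deltaBFG R u ζ) ξ, ξ⟫ := by
  intro ξ hξ
  set a := ⟪ζ, u⟫ with ha
  set c := ⟪ζ, R ζ⟫ with hc
  set b := ⟪u, ξ⟫ with hb
  set d := ⟪R ζ, ξ⟫ with hd
  set r := ⟪R ξ, ξ⟫ with hr
  have hE : ⟪(R + deltaBFG R u ζ) ξ, ξ⟫ =
      r + (1 + c / a) * a⁻¹ * b * b - a⁻¹ * b * d - a⁻¹ * d * b := by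
    simp [deltaBFG, inner_add_left, inner_sub_left, inner_smul_left, real_inner_smul_left]
    ring
  have hcpos : 0 < c := by
    have := hpos ζ hζ
    rwa [real_inner_comm] at this
  have hrpos : 0 < r := hpos ξ hξ
  have h1 : ⟪R ξ, ζ⟫ = d := (hR.isSymmetric ξ ζ).trans (real_inner_comm (R ζ) ξ)
  have h2 : ⟪R ζ, ζ⟫ = c := (real_inner_comm ζ (R ζ)).trans hc.symm
  -- Cauchy-Schwarz gap: d^2 ≤ r * c
  have hcs : d ^ 2 ≤ r * c := by
    set t := d / c with ht
    have htc : t * c = d := div_mul_cancel₀ d hζRζ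
    have hnn : 0 ≤ ⟪R (ξ - t • ζ), ξ - t • ζ⟫ := by
      rcases eq_or_ne (ξ - t • ζ) 0 with h | h
      · rw [h]; simp
      · exact (hpos _ h).le
    have hexp : ⟪R (ξ - t • ζ), ξ - t • ζ⟫ = r - 2 * t * d + t ^ 2 * c := by
      simp only [map_sub, map_smul, inner_sub_left, inner_sub_right, real_inner_smul_left,
        real_inner_smul_right, h1, h2, ← hd, ← hr]
      ring
    rw [hexp] at hnn
    nlinarith [mul_nonneg hnn hcpos.le, htc, hcpos]
  rw [hE]
  rcases eq_or_ne b 0 with hb0 | hb0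
  · rw [hb0]; simpa using hrpos
  · have hEq : r + (1 + c / a) * a⁻¹ * b * b - a⁻¹ * b * d - a⁻¹ * d * b
        = ((r * c - d ^ 2) * a ^ 2 + (b * c - d * a) ^ 2 + b ^ 2 * a * c) / (a ^ 2 * c) := by
      field_simp
      ring
    rw [hEq]
    apply div_pos
    · nlinarith [hcs, sq_nonneg (b * c - d * a), sq_nonneg a, mul_pos hζu' hcpos,
        mul_pos (mul_pos hζu' hcpos) (pow_pos (abs_pos.mpr hb0) 2), sq_abs b]
    · positivity
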